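/- For fixed k the two measures agree on almost all entry-specification events: For every fixed k ≥ 1 there exists a constant C > 0 such that for all n ≥ 2, n² · |F(k,n)| ≤ C · 3^k · C((n−1)², k), where F(k,n) is the set of pairs (I,B) with I ⊆ {1,…,n−1}², |I| = k, B : I → {−1,0,+1}, and P_chio[E_B^{[n−1]²}] ≠ P_lcf[E_B^{[n−1]²}], and C((n−1)², k) is the binomial coefficient counting the k-element subsets of {1,…,n−1}². (Equivalently, the proportion of failing pairs among all 3^k·C((n−1)²,k) pairs is O(n^{−2}) as n → ∞.) -/

import Mathlib

/-- The grid of index positions `{1,…,s-1} × {1,…,t-1}`. -/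
def mgrid (s t : ℕ) : Finset (ℕ × ℕ) := Finset.Icc 1 (s - 1) ×ˢ Finset.Icc 1 (t - 1)

/-- The Chio extension `J̆` of a set `J` of positions:
`J̆ = {(s,t)} ∪ {(i,t) : i ∈ p1(J)} ∪ {(s,j) : j ∈ p2(J)} ∪ J`. -/
def chioExt (s t : ℕ) (J : Finset (ℕ × ℕ)) : Finset (ℕ × ℕ) :=
  insert (s, t) (((J.image Prod.fst).image fun i => (i, t)) ∪
    ((J.image Prod.snd).image fun j => (s, j)) ∪ J)

/-- `A` condenses to `B` on `I`:
`A(i,j)·A(s,t) − A(i,t)·A(s,j) = 2·B(i,j)` for every `(i,j) ∈ I`. -/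
def CondensesTo (s t : ℕ) (I : Finset (ℕ × ℕ)) (A B : ℕ × ℕ → ℤ) : Prop :=
  ∀ p ∈ I, A p * A (s, t) - A (p.1, t) * A (s, p.2) = 2 * B p

/-- `A` encodes a function `E → {−1,+1}`: it takes values `±1` on `E` and is
normalized to `1` off `E`. -/
def IsSignOn (E : Finset (ℕ × ℕ)) (A : ℕ × ℕ → ℤ) : Prop :=
  (∀ p ∈ E, A p = 1 ∨ A p = -1) ∧ ∀ p ∉ E, A p = 1

/-- First projection `p1(I)` of a set of positions. -/
def proj1 (I : Finset (ℕ × ℕ)) : Finset ℕ := I.image Prod.fst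

/-- Second projection `p2(I)` of a set of positions. -/
def proj2 (I : Finset (ℕ × ℕ)) : Finset ℕ := I.image Prod.snd

/-- The vertex set of the bipartite graph `X_B`: a copy `Sum.inl i` of each row index
`i ∈ p1(I)` and a copy `Sum.inr j` of each column index `j ∈ p2(I)`. -/
def vertSet (I : Finset (ℕ × ℕ)) : Finset (ℕ ⊕ ℕ) :=
  (proj1 I).image Sum.inl ∪ (proj2 I).image Sum.inr

/-- `f0(X_B) = |p1(I)| + |p2(I)|`, the number of vertices of `X_B`. -/
def fZero (I : Finset (ℕ × ℕ)) : ℕ := (proj1 I).card + (proj2 I).card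

/-- The full grid `{1,…,n} × {1,…,n}` (the domain of the uncondensed sign matrices). -/
def fullGrid (n : ℕ) : Finset (ℕ × ℕ) := Finset.Icc 1 n ×ˢ Finset.Icc 1 n

/-- `P_chio[E_B^{[n−1]²}] = 2^{−n²} · |{A : {1,…,n}² → {±1} : A condenses to B}|`. -/
noncomputable def PchioN (n : ℕ) (I : Finset (ℕ × ℕ)) (B : ℕ × ℕ → ℤ) : ℚ :=
  (Set.ncard {A : ℕ × ℕ → ℤ | IsSignOn (fullGrid n) A ∧ CondensesTo n n I A B} : ℚ) /
    2 ^ (n ^ 2)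

/-- `P_lcf[E_B^{[n−1]²}] = (1/2)^{|I| + |Supp(B)|}` where `Supp(B) = {p ∈ I : B p ≠ 0}`. -/
def PlcfN (I : Finset (ℕ × ℕ)) (B : ℕ × ℕ → ℤ) : ℚ :=
  (1 / 2 : ℚ) ^ (I.card + (I.filter fun p => B p ≠ 0).card)

/-- The failure set `F(k,n)`: pairs `(I,B)` with `I ⊆ {1,…,n-1}²`, `|I| = k`,
`B : I → {−1,0,+1}` (normalized to `0` off `I`), and
`P_chio[E_B^{[n−1]²}] ≠ P_lcf[E_B^{[n−1]²}]`. -/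
def FailSet (n k : ℕ) : Set (Finset (ℕ × ℕ) × ((ℕ × ℕ) → ℤ)) :=
  {IB | IB.1 ⊆ mgrid n n ∧ IB.1.card = k ∧
    (∀ p ∈ IB.1, IB.2 p = -1 ∨ IB.2 p = 0 ∨ IB.2 p = 1) ∧ (∀ p ∉ IB.1, IB.2 p = 0) ∧
    PchioN n IB.1 IB.2 ≠ PlcfN IB.1 IB.2}

/-!
Write `S` for the support of `B`. For sign matrices, `A` condenses to `B` iff every entry
`A(i,j)`, `(i,j) ∈ I`, equals `(2 B(i,j) + A(i,n) A(n,j)) A(n,n)` and the border entries satisfy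
`A(i,n) A(n,j) = -B(i,j)` for `(i,j) ∈ S`; the entries on `I` are thus determined by the others.
If no cell of `S` shares both its row and its column with other cells of `S` (the bipartite
row/column graph `X_B` with edge set `S` is a disjoint union of stars), each border constraint
can be solved for a border cell that occurs in no other constraint. Exactly `|I| + |S|` of the
`n²` entries are then determined, so `P_chio = 2^{-|I|-|S|} = P_lcf`.

A failing `I` therefore contains a corner `{p, q, r}`, with `q` in the column and `r` in the row
of `p`. There are at most `(n-1)⁴ C((n-1)², k-3)` such `k`-sets, and
`n⁶ C((n-1)², k-3) = O_k(C((n-1)², k))`; the pattern `B` adds a factor `3^k`.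
-/

theorem ncard_setOf_forall_mem_and_eq_const {α β : Type*} (E : Finset α) (V : Finset β) (b : β) :
    {f : α → β | (∀ p ∈ E, f p ∈ V) ∧ ∀ p ∉ E, f p = b}.ncard = V.card ^ E.card := by
  classical
  calc _ = (↑(E.pi fun _ => V) : Set (∀ p ∈ E, β)).ncard := by
        refine Set.ncard_congr (fun f _ p _ => f p) ?_ ?_ ?_
        · rintro f ⟨hf, -⟩
          exact Finset.mem_pi.2 hf
        · rintro f g ⟨-, hf⟩ ⟨-, hg⟩ hfg
          funext p
          by_cases hp : p ∈ E
          · exact congr_fun (congr_fun hfg p) hp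
          · rw [hf p hp, hg p hp]
        · intro g hg
          refine ⟨fun p => if h : p ∈ E then g p h else b, ⟨fun p hp => ?_, fun p hp => ?_⟩, ?_⟩
          · simpa [hp] using Finset.mem_pi.1 hg p hp
          · simp [hp]
          · funext p hp
            simp [hp]
    _ = V.card ^ E.card := by rw [Set.ncard_coe_finset, Finset.card_pi, Finset.prod_const]

theorem isSignOn_iff {E : Finset (ℕ × ℕ)} {A : ℕ × ℕ → ℤ} :
    IsSignOn E A ↔ (∀ p ∈ E, A p ∈ ({1, -1} : Finset ℤ)) ∧ ∀ p ∉ E, A p = 1 := by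
  simp [IsSignOn]

theorem ncard_isSignOn (E : Finset (ℕ × ℕ)) : {A | IsSignOn E A}.ncard = 2 ^ E.card := by
  simp_rw [isSignOn_iff]
  exact ncard_setOf_forall_mem_and_eq_const E _ 1

theorem eq_mul_iff_mul_eq_of_isUnit {x y c : ℤ} (hy : IsUnit y) : x = c * y ↔ x * y = c := by
  constructor <;> rintro rfl <;> rw [mul_assoc, Int.isUnit_mul_self hy, mul_one]

theorem sub_eq_two_mul_iff {a z w b : ℤ} (ha : IsUnit a) (hz : IsUnit z) (hw : IsUnit w)
    (hb : b = -1 ∨ b = 0 ∨ b = 1) :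
    a * z - w = 2 * b ↔ a = (2 * b + w) * z ∧ (b ≠ 0 → w = -b) := by
  rw [Int.isUnit_iff] at ha hz hw
  rcases ha with rfl | rfl <;> rcases hz with rfl | rfl <;> rcases hw with rfl | rfl <;>
    rcases hb with rfl | rfl | rfl <;> decide

theorem isUnit_two_mul_add_mul {b w z : ℤ} (hw : IsUnit w) (hz : IsUnit z)
    (hb : b = -1 ∨ b = 0 ∨ b = 1) (hbw : b ≠ 0 → w = -b) : IsUnit ((2 * b + w) * z) := by
  rw [Int.isUnit_iff] at hw hz ⊢
  rcases hb with rfl | rfl | rfl <;> rcases hw with rfl | rfl <;> rcases hz with rfl | rfl <;>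
    simp_all

theorem IsSignOn.isUnit {E : Finset (ℕ × ℕ)} {A : ℕ × ℕ → ℤ} (hA : IsSignOn E A) {p : ℕ × ℕ}
    (hp : p ∈ E) : IsUnit (A p) :=
  Int.isUnit_iff.2 (hA.1 p hp)

section Piecewise

variable {E X : Finset (ℕ × ℕ)} {A G : ℕ × ℕ → ℤ}

theorem IsSignOn.piecewise_one (hA : IsSignOn E A) : IsSignOn (E \ X) (X.piecewise 1 A) := by
  refine ⟨fun p hp => ?_, fun p hp => ?_⟩
  · rw [Finset.mem_sdiff] at hp
    rw [Finset.piecewise_eq_of_notMem _ _ _ hp.2]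
    exact hA.1 p hp.1
  · by_cases hpX : p ∈ X
    · rw [Finset.piecewise_eq_of_mem _ _ _ hpX, Pi.one_apply]
    · rw [Finset.piecewise_eq_of_notMem _ _ _ hpX]
      exact hA.2 p fun h => hp (Finset.mem_sdiff.2 ⟨h, hpX⟩)

theorem IsSignOn.piecewise (hA : IsSignOn (E \ X) A) (hXE : X ⊆ E)
    (hG : ∀ q ∈ X, IsUnit (G q)) : IsSignOn E (X.piecewise G A) := by
  refine ⟨fun p hp => ?_, fun p hp => ?_⟩
  · by_cases hpX : p ∈ X
    · rw [Finset.piecewise_eq_of_mem _ _ _ hpX]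
      exact Int.isUnit_iff.1 (hG p hpX)
    · rw [Finset.piecewise_eq_of_notMem _ _ _ hpX]
      exact hA.1 p (Finset.mem_sdiff.2 ⟨hp, hpX⟩)
  · rw [Finset.piecewise_eq_of_notMem _ _ _ fun h => hp (hXE h)]
    exact hA.2 p fun h => hp (Finset.mem_sdiff.1 h).1

end Piecewise

theorem ncard_isSignOn_of_determined {ι : Type*} [Nonempty ι] (E : Finset (ℕ × ℕ))
    (S : Finset ι) (d : ι → ℕ × ℕ) (hd : Set.InjOn d S) (hdE : S.image d ⊆ E)
    (F : ι → (ℕ × ℕ → ℤ) → ℤ) (Q : (ℕ × ℕ → ℤ) → Prop)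
    (hF : ∀ i ∈ S, ∀ A A', Set.EqOn A A' (↑(S.image d))ᶜ → F i A = F i A')
    (hQ : ∀ A A', Set.EqOn A A' (↑(S.image d))ᶜ → Q A → Q A')
    (hFsign : ∀ i ∈ S, ∀ A, IsSignOn (E \ S.image d) A → Q A → IsUnit (F i A)) :
    {A | IsSignOn E A ∧ (∀ i ∈ S, A (d i) = F i A) ∧ Q A}.ncard =
      {A | IsSignOn (E \ S.image d) A ∧ Q A}.ncard := by
  classical
  set X := S.image d
  have piecewise_eqOn : ∀ G A : ℕ × ℕ → ℤ, Set.EqOn (X.piecewise G A) A (↑X)ᶜ :=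
    fun G A q hq => Finset.piecewise_eq_of_notMem _ _ _ hq
  refine Set.ncard_congr (fun A _ => X.piecewise 1 A) ?_ ?_ ?_
  · rintro A ⟨hA, -, hQA⟩
    exact ⟨hA.piecewise_one, hQ _ _ (piecewise_eqOn _ A).symm hQA⟩
  · rintro A A' ⟨-, hA, -⟩ ⟨-, hA', -⟩ h
    have heq : Set.EqOn A A' (↑X)ᶜ := fun q hq => by
      simpa [piecewise_eqOn 1 A hq, piecewise_eqOn 1 A' hq] using congr_fun h q
    funext q
    by_cases hq : q ∈ X
    · obtain ⟨i, hi, rfl⟩ := Finset.mem_image.1 hq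
      rw [hA i hi, hA' i hi, hF i hi A A' heq]
    · exact heq hq
  · rintro A' ⟨hA', hQA'⟩
    have hinv : ∀ i ∈ S, Function.invFunOn d S (d i) = i := fun i hi => hd.leftInvOn_invFunOn hi
    set G : ℕ × ℕ → ℤ := fun q => F (Function.invFunOn d S q) A'
    have heq := piecewise_eqOn G A'
    refine ⟨X.piecewise G A', ⟨hA'.piecewise hdE fun q hq => ?_, fun i hi => ?_,
      hQ _ _ heq.symm hQA'⟩, ?_⟩
    · obtain ⟨i, hi, rfl⟩ := Finset.mem_image.1 hq
      simpa [G, hinv i hi] using hFsign i hi A' hA' hQA'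
    · rw [Finset.piecewise_eq_of_mem _ _ _ (Finset.mem_image_of_mem d hi)]
      simp only [G, hinv i hi]
      exact hF i hi _ _ heq.symm
    · funext q
      by_cases hq : q ∈ X
      · rw [Finset.piecewise_eq_of_mem _ _ _ hq, hA'.2 q fun h => (Finset.mem_sdiff.1 h).2 hq,
          Pi.one_apply]
      · exact (piecewise_eqOn 1 _ hq).trans (heq hq)

theorem mem_mgrid {s t : ℕ} {p : ℕ × ℕ} :
    p ∈ mgrid s t ↔ 1 ≤ p.1 ∧ p.1 ≤ s - 1 ∧ 1 ≤ p.2 ∧ p.2 ≤ t - 1 := by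
  simp [mgrid, and_assoc]

theorem mem_fullGrid {n : ℕ} {p : ℕ × ℕ} :
    p ∈ fullGrid n ↔ 1 ≤ p.1 ∧ p.1 ≤ n ∧ 1 ≤ p.2 ∧ p.2 ≤ n := by
  simp [fullGrid, and_assoc]

theorem card_mgrid (n : ℕ) : (mgrid n n).card = (n - 1) ^ 2 := by
  simp [mgrid, sq]

theorem card_fullGrid (n : ℕ) : (fullGrid n).card = n ^ 2 := by
  simp [fullGrid, sq]

theorem mgrid_subset_fullGrid (n : ℕ) : mgrid n n ⊆ fullGrid n := fun p hp => by
  have := mem_mgrid.1 hp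
  exact mem_fullGrid.2 (by omega)

theorem border_mem_fullGrid_sdiff {n : ℕ} {I : Finset (ℕ × ℕ)} {p : ℕ × ℕ} (hI : I ⊆ mgrid n n)
    (hp : p ∈ I) :
    (p.1, n) ∈ fullGrid n \ I ∧ (n, p.2) ∈ fullGrid n \ I ∧ (n, n) ∈ fullGrid n \ I := by
  have hbound : ∀ q ∈ I, 1 ≤ q.1 ∧ q.1 < n ∧ 1 ≤ q.2 ∧ q.2 < n := fun q hq => by
    have := mem_mgrid.1 (hI hq); omega
  have := hbound p hp
  refine ⟨?_, ?_, ?_⟩ <;>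
    refine Finset.mem_sdiff.2 ⟨mem_fullGrid.2 (by simp only; omega), fun h => ?_⟩ <;>
    simpa using hbound _ h

theorem condensesTo_iff {n : ℕ} {I : Finset (ℕ × ℕ)} {A B : ℕ × ℕ → ℤ} (hI : I ⊆ mgrid n n)
    (hB : ∀ p ∈ I, B p = -1 ∨ B p = 0 ∨ B p = 1) (hA : IsSignOn (fullGrid n) A) :
    CondensesTo n n I A B ↔
      (∀ p ∈ I, A p = (2 * B p + A (p.1, n) * A (n, p.2)) * A (n, n)) ∧
        ∀ p ∈ I.filter (fun p => B p ≠ 0), A (p.1, n) * A (n, p.2) = -B p := by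
  have hpt : ∀ p ∈ I, (A p * A (n, n) - A (p.1, n) * A (n, p.2) = 2 * B p ↔
      A p = (2 * B p + A (p.1, n) * A (n, p.2)) * A (n, n) ∧
        (B p ≠ 0 → A (p.1, n) * A (n, p.2) = -B p)) := fun p hp => by
    obtain ⟨h1, h2, h3⟩ := border_mem_fullGrid_sdiff hI hp
    exact sub_eq_two_mul_iff (hA.isUnit (hI.trans (mgrid_subset_fullGrid n) hp))
      (hA.isUnit (Finset.mem_sdiff.1 h3).1)
      ((hA.isUnit (Finset.mem_sdiff.1 h1).1).mul (hA.isUnit (Finset.mem_sdiff.1 h2).1)) (hB p hp)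
  constructor
  · intro h
    refine ⟨fun p hp => ((hpt p hp).1 (h p hp)).1, fun p hp => ?_⟩
    rw [Finset.mem_filter] at hp
    exact ((hpt p hp.1).1 (h p hp.1)).2 hp.2
  · rintro ⟨h1, h2⟩ p hp
    exact (hpt p hp).2 ⟨h1 p hp, fun hb => h2 p (Finset.mem_filter.2 ⟨hp, hb⟩)⟩

theorem ncard_condensesTo {n : ℕ} {I : Finset (ℕ × ℕ)} {B : ℕ × ℕ → ℤ} (hI : I ⊆ mgrid n n)
    (hB : ∀ p ∈ I, B p = -1 ∨ B p = 0 ∨ B p = 1) :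
    {A | IsSignOn (fullGrid n) A ∧ CondensesTo n n I A B}.ncard =
      {A | IsSignOn (fullGrid n \ I) A ∧
        ∀ p ∈ I.filter (fun p => B p ≠ 0), A (p.1, n) * A (n, p.2) = -B p}.ncard := by
  have hborder := fun p (hp : p ∈ I) => border_mem_fullGrid_sdiff hI hp
  have key := ncard_isSignOn_of_determined (fullGrid n) I id (Set.injOn_id _)
    (by simpa using hI.trans (mgrid_subset_fullGrid n))
    (fun p A => (2 * B p + A (p.1, n) * A (n, p.2)) * A (n, n))
    (fun A => ∀ p ∈ I.filter (fun p => B p ≠ 0), A (p.1, n) * A (n, p.2) = -B p)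
    (fun p hp A A' h => by
      simp only [Finset.image_id] at h
      obtain ⟨h1, h2, h3⟩ := hborder p hp
      rw [h (Finset.mem_sdiff.1 h1).2, h (Finset.mem_sdiff.1 h2).2, h (Finset.mem_sdiff.1 h3).2])
    (fun A A' h hA p hp => by
      simp only [Finset.image_id] at h
      obtain ⟨h1, h2, -⟩ := hborder p (Finset.mem_filter.1 hp).1
      rw [← h (Finset.mem_sdiff.1 h1).2, ← h (Finset.mem_sdiff.1 h2).2]
      exact hA p hp)
    (fun p hp A hA hQ => by
      simp only [Finset.image_id] at hA
      obtain ⟨h1, h2, h3⟩ := hborder p hp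
      exact isUnit_two_mul_add_mul ((hA.isUnit h1).mul (hA.isUnit h2)) (hA.isUnit h3) (hB p hp)
        fun hb => hQ p (Finset.mem_filter.2 ⟨hp, hb⟩))
  simp only [Finset.image_id, id] at key
  rw [← key]
  congr 1
  ext A
  exact and_congr_right (condensesTo_iff hI hB)

/-- Read as the edge set of the bipartite row/column graph `X_B`, `S` has an endpoint of degree
one on every edge, i.e. `X_B` is a disjoint union of stars. -/
def IsStarForest (S : Finset (ℕ × ℕ)) : Prop :=
  ∀ p ∈ S, (∀ q ∈ S, q.2 = p.2 → q = p) ∨ ∀ q ∈ S, q.1 = p.1 → q = p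

instance : DecidablePred IsStarForest := fun S =>
  inferInstanceAs (Decidable (∀ p ∈ S, (∀ q ∈ S, q.2 = p.2 → q = p) ∨ ∀ q ∈ S, q.1 = p.1 → q = p))

theorem IsStarForest.mono {S T : Finset (ℕ × ℕ)} (hT : IsStarForest T) (h : S ⊆ T) :
    IsStarForest S := fun p hp =>
  (hT p (h hp)).imp (fun hcol q hq => hcol q (h hq)) (fun hrow q hq => hrow q (h hq))

/-- The border cell `(n, j)` or `(i, n)` of a degree-one endpoint of the edge `p = (i, j)`
(the column `j` when it has degree one); `stemCell` is the border cell of the other endpoint. -/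
def leafCell (n : ℕ) (S : Finset (ℕ × ℕ)) (p : ℕ × ℕ) : ℕ × ℕ :=
  if ∀ q ∈ S, q.2 = p.2 → q = p then (n, p.2) else (p.1, n)

def stemCell (n : ℕ) (S : Finset (ℕ × ℕ)) (p : ℕ × ℕ) : ℕ × ℕ :=
  if ∀ q ∈ S, q.2 = p.2 → q = p then (p.1, n) else (n, p.2)

section StarForest

variable {n : ℕ} {I S : Finset (ℕ × ℕ)}

theorem leafCell_mul_stemCell (A : ℕ × ℕ → ℤ) (p : ℕ × ℕ) :
    A (leafCell n S p) * A (stemCell n S p) = A (p.1, n) * A (n, p.2) := by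
  unfold leafCell stemCell
  split_ifs
  · exact mul_comm _ _
  · rfl

theorem leafCell_injOn (hS : S ⊆ mgrid n n) (hC : IsStarForest S) :
    Set.InjOn (leafCell n S) S := by
  intro p hp p' hp' h
  have hlt : p.1 < n ∧ p'.1 < n := by
    have := mem_mgrid.1 (hS hp); have := mem_mgrid.1 (hS hp'); omega
  by_cases hcol : ∀ q ∈ S, q.2 = p.2 → q = p <;> by_cases hcol' : ∀ q ∈ S, q.2 = p'.2 → q = p'
  · rw [leafCell, leafCell, if_pos hcol, if_pos hcol', Prod.mk.injEq] at h
    exact (hcol p' hp' h.2.symm).symm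
  · rw [leafCell, leafCell, if_pos hcol, if_neg hcol', Prod.mk.injEq] at h
    omega
  · rw [leafCell, leafCell, if_neg hcol, if_pos hcol', Prod.mk.injEq] at h
    omega
  · rw [leafCell, leafCell, if_neg hcol, if_neg hcol', Prod.mk.injEq] at h
    exact ((hC p hp).resolve_left hcol p' hp' h.1.symm).symm

theorem stemCell_notMem_image_leafCell (hS : S ⊆ mgrid n n) (hC : IsStarForest S)
    {p : ℕ × ℕ} (hp : p ∈ S) : stemCell n S p ∉ S.image (leafCell n S) := by
  intro hmem
  obtain ⟨p', hp', h⟩ := Finset.mem_image.1 hmem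
  have hlt : p.1 < n ∧ p'.1 < n := by
    have := mem_mgrid.1 (hS hp); have := mem_mgrid.1 (hS hp'); omega
  by_cases hcol : ∀ q ∈ S, q.2 = p.2 → q = p <;> by_cases hcol' : ∀ q ∈ S, q.2 = p'.2 → q = p'
  · rw [stemCell, leafCell, if_pos hcol, if_pos hcol', Prod.mk.injEq] at h
    omega
  · rw [stemCell, leafCell, if_pos hcol, if_neg hcol', Prod.mk.injEq] at h
    have := (hC p' hp').resolve_left hcol' p hp h.1.symm
    exact hcol' (this ▸ hcol)
  · rw [stemCell, leafCell, if_neg hcol, if_pos hcol', Prod.mk.injEq] at h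
    exact hcol (hcol' p hp h.2.symm ▸ hcol')
  · rw [stemCell, leafCell, if_neg hcol, if_neg hcol', Prod.mk.injEq] at h
    omega

theorem leafCell_mem (hI : I ⊆ mgrid n n) (hSI : S ⊆ I) {p : ℕ × ℕ} (hp : p ∈ S) :
    leafCell n S p ∈ fullGrid n \ I := by
  have := border_mem_fullGrid_sdiff hI (hSI hp)
  unfold leafCell
  split_ifs
  exacts [this.2.1, this.1]

theorem stemCell_mem (hI : I ⊆ mgrid n n) (hSI : S ⊆ I) {p : ℕ × ℕ} (hp : p ∈ S) :
    stemCell n S p ∈ fullGrid n \ I := by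
  have := border_mem_fullGrid_sdiff hI (hSI hp)
  unfold stemCell
  split_ifs
  exacts [this.1, this.2.1]

theorem image_leafCell_subset (hI : I ⊆ mgrid n n) (hSI : S ⊆ I) :
    S.image (leafCell n S) ⊆ fullGrid n \ I := fun q hq => by
  obtain ⟨p, hp, rfl⟩ := Finset.mem_image.1 hq
  exact leafCell_mem hI hSI hp

theorem ncard_borderConstraints {B : ℕ × ℕ → ℤ} (hI : I ⊆ mgrid n n) (hSI : S ⊆ I)
    (hC : IsStarForest S) (hB : ∀ p ∈ S, IsUnit (B p)) :
    {A | IsSignOn (fullGrid n \ I) A ∧ ∀ p ∈ S, A (p.1, n) * A (n, p.2) = -B p}.ncard =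
      2 ^ ((fullGrid n \ I) \ S.image (leafCell n S)).card := by
  have hS := hSI.trans hI
  have key := ncard_isSignOn_of_determined (fullGrid n \ I) S (leafCell n S)
    (leafCell_injOn hS hC) (image_leafCell_subset hI hSI)
    (fun p A => -B p * A (stemCell n S p)) (fun _ => True)
    (fun p hp A A' h => by rw [h (stemCell_notMem_image_leafCell hS hC hp)])
    (fun _ _ _ _ => trivial)
    (fun p hp A hA _ => (hB p hp).neg.mul (hA.isUnit (Finset.mem_sdiff.2
      ⟨stemCell_mem hI hSI hp, stemCell_notMem_image_leafCell hS hC hp⟩)))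
  simp only [and_true] at key
  rw [← ncard_isSignOn, ← key]
  congr 1
  ext A
  refine and_congr_right fun hA => forall₂_congr fun p hp => ?_
  rw [← leafCell_mul_stemCell (S := S),
    eq_mul_iff_mul_eq_of_isUnit (hA.isUnit (stemCell_mem hI hSI hp))]

end StarForest

theorem pchioN_eq_plcfN {n : ℕ} {I : Finset (ℕ × ℕ)} {B : ℕ × ℕ → ℤ} (hI : I ⊆ mgrid n n)
    (hB : ∀ p ∈ I, B p = -1 ∨ B p = 0 ∨ B p = 1)
    (hC : IsStarForest (I.filter fun p => B p ≠ 0)) :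
    PchioN n I B = PlcfN I B := by
  set S := I.filter fun p => B p ≠ 0
  have hSI : S ⊆ I := Finset.filter_subset _ _
  have hBS : ∀ p ∈ S, IsUnit (B p) := fun p hp => by
    rw [Finset.mem_filter] at hp
    rcases hB p hp.1 with h | h | h <;> simp_all
  have hcard : ((fullGrid n \ I) \ S.image (leafCell n S)).card + S.card + I.card = n ^ 2 := by
    rw [← Finset.card_image_of_injOn (leafCell_injOn (hSI.trans hI) hC),
      Finset.card_sdiff_add_card_eq_card (image_leafCell_subset hI hSI),
      Finset.card_sdiff_add_card_eq_card (hI.trans (mgrid_subset_fullGrid n)), card_fullGrid]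
  rw [PchioN, PlcfN, ncard_condensesTo hI hB, ncard_borderConstraints hI hSI hC hBS, ← hcard]
  change _ = (1 / 2 : ℚ) ^ (I.card + S.card)
  push_cast
  rw [pow_add, pow_add, one_div_pow, add_comm I.card, pow_add]
  field_simp

def cornerCells (p : ℕ × ℕ) (a b : ℕ) : Finset (ℕ × ℕ) := {p, (a, p.2), (p.1, b)}

theorem card_cornerCells {p : ℕ × ℕ} {a b : ℕ} (ha : a ≠ p.1) (hb : b ≠ p.2) :
    (cornerCells p a b).card = 3 := by
  rw [cornerCells, Finset.card_insert_of_notMem, Finset.card_pair]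
  · simp [Prod.ext_iff, ha]
  · simp [Prod.ext_iff, ha.symm, hb.symm]

theorem exists_cornerCells_subset {I : Finset (ℕ × ℕ)} (h : ¬ IsStarForest I) :
    ∃ p ∈ I, ∃ a b, a ≠ p.1 ∧ b ≠ p.2 ∧ cornerCells p a b ⊆ I := by
  simp only [IsStarForest, not_forall, not_or, exists_prop] at h
  obtain ⟨p, hp, ⟨q, hq, hq2, hqp⟩, ⟨r, hr, hr1, hrp⟩⟩ := h
  refine ⟨p, hp, q.1, r.2, fun h1 => hqp (Prod.ext h1 hq2), fun h2 => hrp (Prod.ext hr1 h2), ?_⟩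
  simp only [cornerCells, Finset.insert_subset_iff, Finset.singleton_subset_iff]
  exact ⟨hp, hq2 ▸ hq, hr1 ▸ hr⟩

theorem three_le_card_of_not_isStarForest {I : Finset (ℕ × ℕ)} (h : ¬ IsStarForest I) :
    3 ≤ I.card := by
  obtain ⟨p, -, a, b, ha, hb, hsub⟩ := exists_cornerCells_subset h
  exact card_cornerCells ha hb ▸ Finset.card_le_card hsub

theorem card_filter_superset_powersetCard_le {α : Type*} [DecidableEq α] (M T : Finset α)
    (j : ℕ) : ((M.powersetCard (j + T.card)).filter (T ⊆ ·)).card ≤ M.card.choose j := by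
  rw [← Finset.card_powersetCard]
  refine Finset.card_le_card_of_injOn (· \ T) (fun I hI => ?_) (fun I hI I' hI' h => ?_)
  · rw [Finset.mem_coe, Finset.mem_filter, Finset.mem_powersetCard] at hI
    rw [Finset.mem_coe, Finset.mem_powersetCard, Finset.card_sdiff_of_subset hI.2, hI.1.2]
    exact ⟨Finset.sdiff_subset.trans hI.1.1, by omega⟩
  · rw [Finset.mem_coe, Finset.mem_filter] at hI hI'
    rw [← Finset.sdiff_union_of_subset hI.2, ← Finset.sdiff_union_of_subset hI'.2]
    exact congrArg (· ∪ T) h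

def cornered (n k : ℕ) : Finset (Finset (ℕ × ℕ)) :=
  ((mgrid n n).powersetCard k).filter fun I => ¬ IsStarForest I

theorem card_cornered_le_choose (n k : ℕ) : (cornered n k).card ≤ ((n - 1) ^ 2).choose k := by
  rw [← card_mgrid, ← Finset.card_powersetCard]
  exact Finset.card_le_card (Finset.filter_subset _ _)

theorem card_cornered_of_lt_three {n k : ℕ} (hk : k < 3) : (cornered n k).card = 0 := by
  refine Finset.card_eq_zero.2 (Finset.filter_eq_empty_iff.2 fun I hI h => ?_)
  have := three_le_card_of_not_isStarForest h
  rw [(Finset.mem_powersetCard.1 hI).2] at this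
  omega

theorem card_cornered_le (n j : ℕ) :
    (cornered n (j + 3)).card ≤ (n - 1) ^ 4 * ((n - 1) ^ 2).choose j := by
  set M := mgrid n n
  set corners := (M ×ˢ (Finset.Icc 1 (n - 1) ×ˢ Finset.Icc 1 (n - 1))).filter
    fun t : (ℕ × ℕ) × ℕ × ℕ => t.2.1 ≠ t.1.1 ∧ t.2.2 ≠ t.1.2
  have hcover : cornered n (j + 3) ⊆ corners.biUnion fun t =>
      (M.powersetCard (j + 3)).filter (cornerCells t.1 t.2.1 t.2.2 ⊆ ·) := by
    intro I hI
    obtain ⟨hIM, hI⟩ := Finset.mem_filter.1 hI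
    obtain ⟨p, hp, a, b, ha, hb, hsub⟩ := exists_cornerCells_subset hI
    have hIM' := (Finset.mem_powersetCard.1 hIM).1
    have ha' := mem_mgrid.1 (hIM' (hsub (by simp [cornerCells] : (a, p.2) ∈ cornerCells p a b)))
    have hb' := mem_mgrid.1 (hIM' (hsub (by simp [cornerCells] : (p.1, b) ∈ cornerCells p a b)))
    refine Finset.mem_biUnion.2 ⟨(p, a, b), Finset.mem_filter.2 ⟨?_, ha, hb⟩,
      Finset.mem_filter.2 ⟨hIM, hsub⟩⟩
    simp only [Finset.mem_product, Finset.mem_Icc]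
    exact ⟨hIM' hp, ⟨ha'.1, ha'.2.1⟩, ⟨hb'.2.2.1, hb'.2.2.2⟩⟩
  have hcorners : corners.card ≤ (n - 1) ^ 4 := by
    refine (Finset.card_filter_le _ _).trans (le_of_eq ?_)
    rw [Finset.card_product, Finset.card_product, card_mgrid, Nat.card_Icc, Nat.add_sub_cancel]
    ring
  refine (Finset.card_le_card hcover).trans (Finset.card_biUnion_le.trans ?_)
  refine (Finset.sum_le_card_nsmul _ _ (((n - 1) ^ 2).choose j) fun t ht => ?_).trans ?_
  · have := card_filter_superset_powersetCard_le M (cornerCells t.1 t.2.1 t.2.2) j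
    rwa [card_cornerCells (Finset.mem_filter.1 ht).2.1 (Finset.mem_filter.1 ht).2.2,
      card_mgrid] at this
  · rw [smul_eq_mul]
    gcongr

theorem sq_le_four_mul_sub_one_sq {n : ℕ} (hn : 2 ≤ n) : n ^ 2 ≤ 4 * (n - 1) ^ 2 := by
  have : n ≤ 2 * (n - 1) := by omega
  calc n ^ 2 ≤ (2 * (n - 1)) ^ 2 := Nat.pow_le_pow_left this 2
    _ = 4 * (n - 1) ^ 2 := by ring

theorem sq_mul_le_of_le_choose {n j x : ℕ} (hn : 2 ≤ n) (hx : x ≤ ((n - 1) ^ 2).choose (j + 3))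
    (hx' : x ≤ (n - 1) ^ 4 * ((n - 1) ^ 2).choose j) :
    n ^ 2 * x ≤ (8 * (j + 3) + 192 * (j + 3).choose 3) * ((n - 1) ^ 2).choose (j + 3) := by
  set m := (n - 1) ^ 2
  have hnm : n ^ 2 ≤ 4 * m := sq_le_four_mul_sub_one_sq hn
  by_cases hsmall : m < 2 * j + 4
  · calc n ^ 2 * x ≤ (8 * (j + 3)) * m.choose (j + 3) := Nat.mul_le_mul (by omega) hx
      _ ≤ _ := by gcongr; omega
  · have hdesc : (m - j - 2) ^ 3 ≤ 6 * (m - j).choose 3 := by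
      have := Nat.pow_sub_le_descFactorial (m - j) 3
      rwa [Nat.descFactorial_eq_factorial_mul_choose, show m - j + 1 - 3 = m - j - 2 by omega]
        at this
    have hprod : m.choose j * (m - j).choose 3 = m.choose (j + 3) * (j + 3).choose 3 := by
      have := Nat.choose_mul (n := m) (k := j + 3) (s := j) (by omega)
      rw [Nat.choose_symm_add] at this
      simpa using this.symm
    calc n ^ 2 * x ≤ 4 * m * (m ^ 2 * m.choose j) := by
          refine Nat.mul_le_mul hnm (hx'.trans (le_of_eq ?_))
          simp only [m, ← pow_mul]
      _ = 4 * m ^ 3 * m.choose j := by ring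
      _ ≤ 4 * (2 * (m - j - 2)) ^ 3 * m.choose j := by gcongr; omega
      _ = 32 * (m - j - 2) ^ 3 * m.choose j := by ring
      _ ≤ 32 * (6 * (m - j).choose 3) * m.choose j := by gcongr
      _ = 192 * (m.choose j * (m - j).choose 3) := by ring
      _ = 192 * (j + 3).choose 3 * m.choose (j + 3) := by rw [hprod]; ring
      _ ≤ _ := by gcongr; omega

theorem sq_mul_card_cornered_le {n : ℕ} (hn : 2 ≤ n) (k : ℕ) :
    n ^ 2 * (cornered n k).card ≤ (8 * k + 192 * k.choose 3) * ((n - 1) ^ 2).choose k := by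
  obtain hk | ⟨j, rfl⟩ : k < 3 ∨ ∃ j, k = j + 3 := by
    rcases lt_or_ge k 3 with hk | hk
    exacts [Or.inl hk, Or.inr ⟨k - 3, by omega⟩]
  · simp [card_cornered_of_lt_three hk]
  · exact sq_mul_le_of_le_choose hn (card_cornered_le_choose n _) (card_cornered_le n j)

theorem not_isStarForest_of_mem_failSet {n k : ℕ} {IB : Finset (ℕ × ℕ) × (ℕ × ℕ → ℤ)}
    (h : IB ∈ FailSet n k) : ¬ IsStarForest IB.1 := fun hC =>
  h.2.2.2.2 (pchioN_eq_plcfN h.1 h.2.2.1 (hC.mono (Finset.filter_subset _ _)))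

theorem ncard_failSet_le (n k : ℕ) : (FailSet n k).ncard ≤ 3 ^ k * (cornered n k).card := by
  set P : Finset (ℕ × ℕ) → Set (ℕ × ℕ → ℤ) := fun I =>
    {B | (∀ p ∈ I, B p ∈ ({-1, 0, 1} : Finset ℤ)) ∧ ∀ p ∉ I, B p = 0}
  have hP : ∀ I, (P I).ncard = 3 ^ I.card := fun I => ncard_setOf_forall_mem_and_eq_const I _ 0
  have hsub : FailSet n k ⊆ ⋃ I ∈ cornered n k, {I} ×ˢ P I := by
    rintro ⟨I, B⟩ h
    simp only [Set.mem_iUnion]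
    exact ⟨I, Finset.mem_filter.2 ⟨Finset.mem_powersetCard.2 ⟨h.1, h.2.1⟩,
      not_isStarForest_of_mem_failSet h⟩, rfl, fun p hp => by simpa using h.2.2.1 p hp, h.2.2.2.1⟩
  have hfin : (⋃ I ∈ cornered n k, {I} ×ˢ P I).Finite :=
    (cornered n k).finite_toSet.biUnion fun I _ =>
      (Set.finite_singleton I).prod (Set.finite_of_ncard_pos (by rw [hP]; positivity))
  calc (FailSet n k).ncard ≤ (⋃ I ∈ cornered n k, {I} ×ˢ P I).ncard := Set.ncard_le_ncard hsub hfin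
    _ ≤ ∑ I ∈ cornered n k, ({I} ×ˢ P I).ncard := Finset.set_ncard_biUnion_le _ _
    _ = ∑ _I ∈ cornered n k, 3 ^ k := Finset.sum_congr rfl fun I hI => by
        rw [Set.ncard_prod, Set.ncard_singleton, one_mul, hP,
          (Finset.mem_powersetCard.1 (Finset.mem_filter.1 hI).1).2]
    _ = 3 ^ k * (cornered n k).card := by rw [Finset.sum_const, smul_eq_mul, mul_comm]

/-- **For fixed `k` the two measures agree on almost all entry-specification events.**
For every fixed `k ≥ 1` there is a constant `C > 0` such that for all `n ≥ 2`,
`n² · |F(k,n)| ≤ C · 3^k · C((n−1)², k)`; i.e. the proportion of failing pairs among all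
`3^k · C((n−1)², k)` entry-specification events with `k` specified entries is
`O(n^{−2})` as `n → ∞`. -/
theorem failures_proportion_vanishes (k : ℕ) (hk : 1 ≤ k) :
    ∃ C : ℝ, 0 < C ∧ ∀ n : ℕ, 2 ≤ n →
      ((n : ℝ) ^ 2 * Set.ncard (FailSet n k)) ≤
        C * 3 ^ k * (Nat.choose ((n - 1) ^ 2) k : ℝ) := by
  refine ⟨8 * k + 192 * k.choose 3, by positivity, fun n hn => ?_⟩
  have key : n ^ 2 * (FailSet n k).ncard ≤
      (8 * k + 192 * k.choose 3) * 3 ^ k * ((n - 1) ^ 2).choose k :=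
    calc n ^ 2 * (FailSet n k).ncard ≤ 3 ^ k * (n ^ 2 * (cornered n k).card) := by
          rw [mul_left_comm]
          exact Nat.mul_le_mul_left _ (ncard_failSet_le n k)
      _ ≤ 3 ^ k * ((8 * k + 192 * k.choose 3) * ((n - 1) ^ 2).choose k) :=
          Nat.mul_le_mul_left _ (sq_mul_card_cornered_le hn k)
      _ = _ := by ring
  exact_mod_cast key
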